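/- arXiv:2008.13374 — 2 statements merged into one kernel-verified Lean document; each statement's English description precedes it below -/
import Mathlib

section
/- Let S = {x₁,…,x_N} ⊂ ℝ^d be a finite set and for a matrix A define p_{S,A}(x_i, x) = K_A(x_i,x) / Σ_{j=1}^N K_A(x_j,x), where K_A(x,y) = 1/(1+‖A(x−y)‖²). If (1+ε)^{-1}‖A2 v‖ ≤ ‖A1 v‖ ≤ (1+ε)‖A2 v‖ for all v ∈ ℝ^d, then for every query x ∈ ℝ^d and every x_i ∈ S, (1+ε)^{-4} p_{S,A2}(x_i,x) ≤ p_{S,A1}(x_i,x) ≤ (1+ε)^4 p_{S,A2}(x_i,x). -/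
/-!
Since `K_A(x, y) = 1 / (1 + ‖A (x - y)‖²)`, comparing `‖A₁ v‖` and `‖A₂ v‖` up to a factor `c = 1 + ε`
compares the kernels `K_{A₁}` and `K_{A₂}` up to `c²`, pointwise and hence also after summing over `S`.
The normalised weight is a quotient of the two, so it changes by at most `c² · c² = c⁴`;
the lower bound is the upper bound with `A₁` and `A₂` exchanged.
-/

open scoped BigOperators

noncomputable def kerK {d : ℕ} (A : Matrix (Fin d) (Fin d) ℝ) (x y : Fin d → ℝ) : ℝ :=
  1 / (1 + ∑ i, (A.mulVec (x - y) i) ^ 2)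

noncomputable def eNorm {d : ℕ} (A : Matrix (Fin d) (Fin d) ℝ) (v : Fin d → ℝ) : ℝ :=
  Real.sqrt (∑ i, (A.mulVec v i) ^ 2)

noncomputable def pWeight {d : ℕ} (S : Finset (Fin d → ℝ))
    (A : Matrix (Fin d) (Fin d) ℝ) (xi x : Fin d → ℝ) : ℝ :=
  kerK A xi x / ∑ xj ∈ S, kerK A xj x

lemma inv_one_add_sq_le_sq_mul {a b c : ℝ} (hc : 1 ≤ c) (hb : 0 ≤ b) (hba : b ≤ c * a) :
    (1 + a ^ 2)⁻¹ ≤ c ^ 2 * (1 + b ^ 2)⁻¹ := by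
  have hb2 : b ^ 2 ≤ c ^ 2 * a ^ 2 := by
    rw [← mul_pow]; exact pow_le_pow_left₀ hb hba 2
  rw [← div_eq_mul_inv, inv_eq_one_div, div_le_div_iff₀ (by positivity) (by positivity)]
  nlinarith

lemma div_le_mul_mul_div {a b A B c c' : ℝ} (hc : 0 ≤ c) (hb : 0 ≤ b) (hA : 0 < A) (hB : 0 < B)
    (hab : a ≤ c * b) (hBA : B ≤ c' * A) :
    a / A ≤ c * c' * (b / B) := by
  rw [mul_div_assoc', div_le_div_iff₀ hA hB]
  calc a * B ≤ (c * b) * (c' * A) := mul_le_mul hab hBA hB.le (by positivity)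
    _ = c * c' * b * A := by ring

section Kernel

variable {d : ℕ} (A : Matrix (Fin d) (Fin d) ℝ)

lemma eNorm_nonneg (v : Fin d → ℝ) : 0 ≤ eNorm A v :=
  Real.sqrt_nonneg _

lemma kerK_eq_inv_one_add_eNorm_sq (x y : Fin d → ℝ) :
    kerK A x y = (1 + eNorm A (x - y) ^ 2)⁻¹ := by
  rw [kerK, eNorm, Real.sq_sqrt (Finset.sum_nonneg fun i _ => sq_nonneg _), one_div]

lemma kerK_pos (x y : Fin d → ℝ) : 0 < kerK A x y := by
  rw [kerK_eq_inv_one_add_eNorm_sq]; positivity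

lemma kerK_le_sq_mul_kerK {B : Matrix (Fin d) (Fin d) ℝ} {c : ℝ} (hc : 1 ≤ c) {x y : Fin d → ℝ}
    (h : eNorm B (x - y) ≤ c * eNorm A (x - y)) :
    kerK A x y ≤ c ^ 2 * kerK B x y := by
  simp only [kerK_eq_inv_one_add_eNorm_sq]
  exact inv_one_add_sq_le_sq_mul hc (eNorm_nonneg B _) h

lemma pWeight_le_pow_four_mul {B : Matrix (Fin d) (Fin d) ℝ} {c : ℝ} (hc : 1 ≤ c)
    (hAB : ∀ v, eNorm A v ≤ c * eNorm B v) (hBA : ∀ v, eNorm B v ≤ c * eNorm A v)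
    {S : Finset (Fin d → ℝ)} {xi : Fin d → ℝ} (hxi : xi ∈ S) (x : Fin d → ℝ) :
    pWeight S A xi x ≤ c ^ 4 * pWeight S B xi x := by
  have hsum_pos (M : Matrix (Fin d) (Fin d) ℝ) : 0 < ∑ xj ∈ S, kerK M xj x :=
    Finset.sum_pos (fun j _ => kerK_pos M j x) ⟨xi, hxi⟩
  have hsum : ∑ xj ∈ S, kerK B xj x ≤ c ^ 2 * ∑ xj ∈ S, kerK A xj x := by
    rw [Finset.mul_sum]
    exact Finset.sum_le_sum fun j _ => kerK_le_sq_mul_kerK B hc (hAB _)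
  calc pWeight S A xi x ≤ c ^ 2 * c ^ 2 * pWeight S B xi x :=
        div_le_mul_mul_div (by positivity) (kerK_pos B xi x).le (hsum_pos A) (hsum_pos B)
          (kerK_le_sq_mul_kerK A hc (hBA _)) hsum
    _ = c ^ 4 * pWeight S B xi x := by ring

end Kernel

theorem stmt1_general {d : ℕ} (ε : ℝ) (hε : 0 ≤ ε)
    (S : Finset (Fin d → ℝ))
    (A1 A2 : Matrix (Fin d) (Fin d) ℝ)
    (hlow : ∀ v : Fin d → ℝ, (1 + ε)⁻¹ * eNorm A2 v ≤ eNorm A1 v)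
    (hup : ∀ v : Fin d → ℝ, eNorm A1 v ≤ (1 + ε) * eNorm A2 v) :
    ∀ x : Fin d → ℝ, ∀ xi ∈ S,
      (1 + ε)⁻¹ ^ 4 * pWeight S A2 xi x ≤ pWeight S A1 xi x ∧
      pWeight S A1 xi x ≤ (1 + ε) ^ 4 * pWeight S A2 xi x := by
  intro x xi hxi
  have hc : 1 ≤ 1 + ε := le_add_of_nonneg_right hε
  have hc_pos : 0 < 1 + ε := zero_lt_one.trans_le hc
  have hlow' : ∀ v, eNorm A2 v ≤ (1 + ε) * eNorm A1 v := fun v => by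
    rw [← inv_mul_le_iff₀ hc_pos]; exact hlow v
  refine ⟨?_, pWeight_le_pow_four_mul A1 hc hup hlow' hxi x⟩
  rw [inv_pow, inv_mul_le_iff₀ (by positivity)]
  exact pWeight_le_pow_four_mul A2 hc hlow' hup hxi x

theorem stmt1 {d : ℕ} (ε : ℝ) (hε : 0 ≤ ε)
    (S : Finset (Fin d → ℝ)) (hS : S.Nonempty)
    (A1 A2 : Matrix (Fin d) (Fin d) ℝ)
    (hlow : ∀ v : Fin d → ℝ, (1 + ε)⁻¹ * eNorm A2 v ≤ eNorm A1 v)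
    (hup : ∀ v : Fin d → ℝ, eNorm A1 v ≤ (1 + ε) * eNorm A2 v) :
    ∀ x : Fin d → ℝ, ∀ xi ∈ S,
      (1 + ε)⁻¹ ^ 4 * pWeight S A2 xi x ≤ pWeight S A1 xi x ∧
      pWeight S A1 xi x ≤ (1 + ε) ^ 4 * pWeight S A2 xi x :=
  stmt1_general ε hε S A1 A2 hlow hup
end

section
/- Let f : G → [0,1] be L-Lipschitz (w.r.t. ℓ∞) on a grid G ⊂ [0,l]^d of mesh ε/(3L), and let f̂ : G → {0, ε/3, 2ε/3, …, 1} round each value f(x) to the nearest multiple of ε/3. Then f̂ is L-Lipschitz on G: for all x,y ∈ G, |f̂(x)−f̂(y)| ≤ L‖x−y‖_∞. -/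
/-!
Write `c = ε / 3` and `δ = ε / (3L)`. Two grid points differ in every coordinate by an integer
multiple of `δ`, so their sup-distance is `n δ` for some `n : ℤ`, and then `L · dist x y = n c`.
Rounding to the nearest multiple of `c` is `t ↦ ⌈t / c - 1/2⌉ c`, and `⌈·⌉` cannot turn two reals
at distance at most an integer `n` into integers at distance more than `n`.
-/

theorem dist_mem_zmultiples_of_forall_sub_mem {ι : Type*} [Fintype ι] {δ : ℝ} {x y : ι → ℝ}
    (h : ∀ i, x i - y i ∈ AddSubgroup.zmultiples δ) :
    dist x y ∈ AddSubgroup.zmultiples δ := by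
  rw [dist_pi_def]
  refine Finset.sup_induction (p := fun r : NNReal => (r : ℝ) ∈ AddSubgroup.zmultiples δ)
    (zero_mem _) (fun a ha b hb => ?_) (fun i _ => ?_)
  · rcases max_choice a b with hab | hab <;> simpa only [hab]
  · simpa only [coe_nndist, Real.dist_eq, abs_mem_iff] using h i

section FloorField

variable {K : Type*} [Field K] [LinearOrder K] [IsStrictOrderedRing K] [FloorRing K]

theorem Int.abs_ceil_sub_ceil_le {u v : K} {n : ℤ} (h : |u - v| ≤ n) : |⌈u⌉ - ⌈v⌉| ≤ n := by
  have ceil_le_ceil_add {a b : K} (hab : a ≤ b + n) : ⌈a⌉ ≤ ⌈b⌉ + n := by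
    simpa only [Int.ceil_add_intCast] using Int.ceil_mono hab
  obtain ⟨h₁, h₂⟩ := abs_le.1 h
  exact abs_le.2 ⟨by linarith [ceil_le_ceil_add (a := v) (b := u) (by linarith)],
    by linarith [ceil_le_ceil_add (a := u) (b := v) (by linarith)]⟩

theorem abs_roundNearest_sub_le {c s t : K} {n : ℤ} (hc : 0 < c) (h : |s - t| ≤ n * c) :
    |(⌈s / c - 1 / 2⌉ : K) * c - (⌈t / c - 1 / 2⌉ : K) * c| ≤ n * c := by
  have hst : |(s / c - 1 / 2) - (t / c - 1 / 2)| ≤ n := by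
    rwa [sub_sub_sub_cancel_right, ← sub_div, abs_div, abs_of_pos hc, div_le_iff₀ hc]
  rw [← sub_mul, abs_mul, abs_of_pos hc]
  gcongr
  exact_mod_cast Int.abs_ceil_sub_ceil_le hst

end FloorField

theorem stmt12_general (d : ℕ) (L l ε : ℝ) (hL : 0 < L)
    (hε : ε ∈ Set.Ioc (0:ℝ) 1)
    (G : Set (Fin d → ℝ))
    (hG : G = {x | (∀ i, x i ∈ Set.Icc (0:ℝ) l) ∧
      ∀ i, ∃ k : ℕ, x i = (k : ℝ) * (ε / (3 * L))})
    (f : (Fin d → ℝ) → ℝ)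
    (hf : ∀ x ∈ G, ∀ y ∈ G, |f x - f y| ≤ L * dist x y)
    (fhat : (Fin d → ℝ) → ℝ)
    -- `fhat` rounds `f` to the nearest multiple of `ε/3`, ties rounded down
    (hfhat : ∀ x, fhat x = (⌈f x / (ε / 3) - 1 / 2⌉ : ℝ) * (ε / 3)) :
    ∀ x ∈ G, ∀ y ∈ G, |fhat x - fhat y| ≤ L * dist x y := by
  intro x hx y hy
  have mem_grid {z : Fin d → ℝ} (hz : z ∈ G) i : z i ∈ AddSubgroup.zmultiples (ε / (3 * L)) := by
    obtain ⟨k, hk⟩ := (hG ▸ hz).2 i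
    exact ⟨k, by simp [hk]⟩
  obtain ⟨n, hn⟩ := dist_mem_zmultiples_of_forall_sub_mem
    fun i => sub_mem (mem_grid hx i) (mem_grid hy i)
  have hLd : L * dist x y = n * (ε / 3) := by
    rw [← hn]
    simp only [zsmul_eq_mul]
    field_simp
  rw [hfhat x, hfhat y, hLd]
  exact abs_roundNearest_sub_le (by linarith [hε.1]) (hLd ▸ hf x hx y hy)

theorem stmt12 (d : ℕ) (hd : 1 ≤ d) (L l ε : ℝ) (hL : 0 < L) (hl : 0 < l)
    (hε : ε ∈ Set.Ioc (0:ℝ) 1) (hεint : ∃ m : ℕ, (m : ℝ) = 3 / ε)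
    (G : Set (Fin d → ℝ))
    (hG : G = {x | (∀ i, x i ∈ Set.Icc (0:ℝ) l) ∧
      ∀ i, ∃ k : ℕ, x i = (k : ℝ) * (ε / (3 * L))})
    (f : (Fin d → ℝ) → ℝ)
    (hf : ∀ x ∈ G, ∀ y ∈ G, |f x - f y| ≤ L * dist x y)
    (hfr : ∀ x ∈ G, f x ∈ Set.Icc (0:ℝ) 1)
    (fhat : (Fin d → ℝ) → ℝ)
    -- `fhat` rounds `f` to the nearest multiple of `ε/3`, ties rounded down
    (hfhat : ∀ x, fhat x = (⌈f x / (ε / 3) - 1 / 2⌉ : ℝ) * (ε / 3)) :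
    ∀ x ∈ G, ∀ y ∈ G, |fhat x - fhat y| ≤ L * dist x y :=
  stmt12_general d L l ε hL hε G hG f hf fhat hfhat
end
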